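/- arXiv:1005.5072 — 5 statements merged into one kernel-verified Lean document; each statement's English description precedes it below -/
import Mathlib

section
/- Under the Bounded-Coefficient Scheme Hypotheses, assume additionally that all the maps T_1, …, T_m and I_1, …, I_m are continuous. Then lim_{n→∞} ‖x_{n+1} − x_n‖ = 0. -/
/-!
Fix a common fixed point `p`. The gauge bounds make each application of `I_iⁿ` or `T_iⁿ` enlarge
`‖· - p‖ + 1` by at most a factor `exp eₙ` with `∑ eₙ < ∞`, so `‖xₙ - p‖` converges to some `c`.
Writing `xₙ₊₁ = α₀ₙ xₙ + (1 - α₀ₙ) zₙ` with `zₙ` a convex combination of the `T_iⁿ yₙ`, the distances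
`‖zₙ - p‖` are asymptotically at most `c` while `‖xₙ₊₁ - p‖ → c`; by uniform convexity this forces
`xₙ - zₙ → 0`, and `xₙ₊₁ - xₙ = (1 - α₀ₙ) (zₙ - xₙ)`.
-/

open Filter Topology

theorem exists_tendsto_of_le_exp_mul {a s : ℕ → ℝ} (ha : ∀ n, 0 ≤ a n) (hs : Summable s)
    (h : ∀ n, a (n + 1) ≤ Real.exp (s n) * a n) : ∃ c, Tendsto a atTop (𝓝 c) := by
  set S : ℕ → ℝ := fun n => ∑ k ∈ Finset.range n, s k
  have hanti : Antitone fun n => Real.exp (-S n) * a n := by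
    refine antitone_nat_of_succ_le fun n => ?_
    calc Real.exp (-S (n + 1)) * a (n + 1)
        ≤ Real.exp (-S (n + 1)) * (Real.exp (s n) * a n) := by gcongr; exact h n
      _ = Real.exp (-S n) * a n := by
        rw [← mul_assoc, ← Real.exp_add]
        congr 2
        simp only [S, Finset.sum_range_succ]
        ring
  have hbdd : BddBelow (Set.range fun n => Real.exp (-S n) * a n) :=
    ⟨0, by rintro _ ⟨n, rfl⟩; exact mul_nonneg (Real.exp_pos _).le (ha n)⟩
  refine ⟨Real.exp (∑' k, s k) * ⨅ n, Real.exp (-S n) * a n, ?_⟩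
  refine (((Real.continuous_exp.tendsto _).comp hs.hasSum.tendsto_sum_nat).mul
    (tendsto_atTop_ciInf hanti hbdd)).congr fun n => ?_
  simp only [Function.comp_apply, ← mul_assoc, ← Real.exp_add, add_neg_cancel, Real.exp_zero,
    one_mul, S]

theorem exists_forall_closed_ball_norm_smul_add_one_sub_smul_le {E : Type*}
    [NormedAddCommGroup E] [NormedSpace ℝ E] [UniformConvexSpace E] {ε : ℝ} (hε : 0 < ε) :
    ∃ δ, 0 < δ ∧ ∀ ⦃x : E⦄, ‖x‖ ≤ 1 → ∀ ⦃y⦄, ‖y‖ ≤ 1 → ε ≤ ‖x - y‖ → ∀ t ∈ Set.Icc (0 : ℝ) 1,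
      ‖t • x + (1 - t) • y‖ ≤ 1 - min t (1 - t) * δ := by
  obtain ⟨δ, hδ, H⟩ := exists_forall_closed_ball_dist_add_le_two_sub E hε
  have half : ∀ ⦃x : E⦄, ‖x‖ ≤ 1 → ∀ ⦃y⦄, ‖y‖ ≤ 1 → ε ≤ ‖x - y‖ → ∀ t, 0 ≤ t → t ≤ 1 / 2 →
      ‖t • x + (1 - t) • y‖ ≤ 1 - t * δ := by
    intro x hx y hy hxy t ht0 ht
    calc ‖t • x + (1 - t) • y‖ = ‖t • (x + y) + (1 - 2 * t) • y‖ := by congr 1; module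
      _ ≤ t * ‖x + y‖ + (1 - 2 * t) * ‖y‖ := by
        refine (norm_add_le _ _).trans_eq ?_
        rw [norm_smul_of_nonneg ht0, norm_smul_of_nonneg (by linarith)]
      _ ≤ t * (2 - δ) + (1 - 2 * t) * 1 := by
        have h2t : 0 ≤ 1 - 2 * t := by linarith
        gcongr
        exact H hx hy hxy
      _ = 1 - t * δ := by ring
  refine ⟨δ, hδ, fun x hx y hy hxy t ⟨ht0, ht1⟩ => ?_⟩
  rcases le_total t (1 / 2) with ht | ht
  · exact (half hx hy hxy t ht0 ht).trans (by gcongr; exact min_le_left _ _)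
  · have := half hy hx (by rwa [norm_sub_rev]) (1 - t) (by linarith) (by linarith)
    rw [sub_sub_cancel, add_comm] at this
    exact this.trans (by gcongr; exact min_le_right _ _)

theorem tendsto_sub_nhds_zero_of_uniformConvex {E : Type*} [NormedAddCommGroup E]
    [NormedSpace ℝ E] [UniformConvexSpace E] {α β c : ℝ} (hα : 0 < α) (hβ : β < 1)
    {t : ℕ → ℝ} (ht : ∀ n, t n ∈ Set.Icc α β) {u v : ℕ → E} {r : ℕ → ℝ}
    (hr : Tendsto r atTop (𝓝 c)) (hu : ∀ n, ‖u n‖ ≤ r n) (hv : ∀ n, ‖v n‖ ≤ r n)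
    (hw : Tendsto (fun n => ‖t n • u n + (1 - t n) • v n‖) atTop (𝓝 c)) :
    Tendsto (fun n => u n - v n) atTop (𝓝 0) := by
  have huv : ∀ n, ‖u n - v n‖ ≤ 2 * r n := fun n => by
    linarith [norm_sub_le (u n) (v n), hu n, hv n]
  rcases (ge_of_tendsto' hw fun n => norm_nonneg _).eq_or_lt with rfl | hc
  · exact squeeze_zero_norm huv (by simpa using hr.const_mul 2)
  rw [NormedAddGroup.tendsto_nhds_zero]
  intro ε hε
  set κ := min α (1 - β)
  have hκ : 0 < κ := lt_min hα (by linarith)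
  obtain ⟨δ, hδ, H⟩ :=
    exists_forall_closed_ball_norm_smul_add_one_sub_smul_le (E := E) (ε := ε / (c + 1))
      (by positivity)
  set η := min 1 (c * κ * δ / 2)
  have hη : 0 < η := lt_min one_pos (by positivity)
  set R := c + η
  have hR : 0 < R := by positivity
  have hRc : R * (1 - κ * δ) < c := by
    have : η ≤ c * κ * δ / 2 := min_le_right _ _
    nlinarith [mul_pos hκ hδ]
  -- Rescaled by `R⁻¹`, `uₙ` and `vₙ` lie in the unit ball for large `n`; a gap `‖uₙ - vₙ‖ ≥ ε`
  -- would then keep `‖t uₙ + (1 - t) vₙ‖ ≤ R (1 - κ δ) < c`.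
  filter_upwards [hr.eventually_lt_const (by linarith : c < R), hw.eventually_const_lt hRc]
    with n hrn hwn
  by_contra! hεn
  have hunit : ∀ w : E, ‖w‖ ≤ r n → ‖R⁻¹ • w‖ ≤ 1 := fun w hwr => by
    rw [norm_smul_of_nonneg (inv_nonneg.2 hR.le), inv_mul_le_one₀ hR]
    linarith
  have hsep : ε / (c + 1) ≤ ‖R⁻¹ • u n - R⁻¹ • v n‖ := by
    rw [← smul_sub, norm_smul_of_nonneg (inv_nonneg.2 hR.le), ← div_eq_inv_mul]
    exact div_le_div₀ (norm_nonneg _) hεn hR (by linarith [min_le_left 1 (c * κ * δ / 2)])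
  have hκt : κ ≤ min (t n) (1 - t n) :=
    min_le_min (ht n).1 (by linarith [(ht n).2])
  have hcomb := H (hunit _ (hu n)) (hunit _ (hv n)) hsep (t n)
    ⟨hα.le.trans (ht n).1, by linarith [(ht n).2]⟩
  rw [smul_comm (t n), smul_comm (1 - t n), ← smul_add,
    norm_smul_of_nonneg (inv_nonneg.2 hR.le), inv_mul_le_iff₀ hR] at hcomb
  nlinarith [mul_le_mul_of_nonneg_right hκt hδ.le]

theorem tendsto_norm_succ_sub_of_mann {E : Type*} [NormedAddCommGroup E] [NormedSpace ℝ E]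
    [UniformConvexSpace E] {α β : ℝ} (hα : 0 < α) (hβ : β < 1) {t : ℕ → ℝ}
    (ht : ∀ n, t n ∈ Set.Icc α β) {x z : ℕ → E} {p : E} {s : ℕ → ℝ} (hs0 : ∀ n, 0 ≤ s n)
    (hs : Summable s) (hx : ∀ n, x (n + 1) = t n • x n + (1 - t n) • z n)
    (hz : ∀ n, ‖z n - p‖ + 1 ≤ Real.exp (s n) * (‖x n - p‖ + 1)) :
    Tendsto (fun n => ‖x (n + 1) - x n‖) atTop (𝓝 0) := by
  have ht0 : ∀ n, 0 ≤ t n := fun n => hα.le.trans (ht n).1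
  have ht1 : ∀ n, 0 ≤ 1 - t n := fun n => by linarith [(ht n).2]
  have hexp : ∀ n, 1 ≤ Real.exp (s n) := fun n => Real.one_le_exp (hs0 n)
  have hstep : ∀ n, x (n + 1) - p = t n • (x n - p) + (1 - t n) • (z n - p) := fun n => by
    rw [hx]; module
  have hrec : ∀ n, ‖x (n + 1) - p‖ + 1 ≤ Real.exp (s n) * (‖x n - p‖ + 1) := fun n => by
    have hconv : ‖x (n + 1) - p‖ ≤ t n * ‖x n - p‖ + (1 - t n) * ‖z n - p‖ := by
      rw [hstep]
      refine (norm_add_le _ _).trans_eq ?_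
      rw [norm_smul_of_nonneg (ht0 n), norm_smul_of_nonneg (ht1 n)]
    calc ‖x (n + 1) - p‖ + 1 ≤ t n * (‖x n - p‖ + 1) + (1 - t n) * (‖z n - p‖ + 1) := by
          linarith
      _ ≤ t n * (Real.exp (s n) * (‖x n - p‖ + 1))
          + (1 - t n) * (Real.exp (s n) * (‖x n - p‖ + 1)) := by
          have := ht0 n; have := ht1 n
          gcongr
          · exact le_mul_of_one_le_left (by positivity) (hexp n)
          · exact hz n
      _ = Real.exp (s n) * (‖x n - p‖ + 1) := by ring
  obtain ⟨L, hL⟩ := exists_tendsto_of_le_exp_mul (a := fun n => ‖x n - p‖ + 1)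
    (fun n => by positivity) hs hrec
  set r : ℕ → ℝ := fun n => Real.exp (s n) * (‖x n - p‖ + 1) - 1
  have hr : Tendsto r atTop (𝓝 (L - 1)) := by
    have hexp1 : Tendsto (fun n => Real.exp (s n)) atTop (𝓝 1) := by
      simpa [Function.comp_def] using (Real.continuous_exp.tendsto 0).comp hs.tendsto_atTop_zero
    simpa using (hexp1.mul hL).sub_const 1
  have hxr : ∀ n, ‖x n - p‖ ≤ r n := fun n => by
    nlinarith [mul_le_mul_of_nonneg_right (hexp n) (by positivity : 0 ≤ ‖x n - p‖ + 1)]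
  have hzr : ∀ n, ‖z n - p‖ ≤ r n := fun n => by linarith [hz n]
  have hw : Tendsto (fun n => ‖t n • (x n - p) + (1 - t n) • (z n - p)‖) atTop
      (𝓝 (L - 1)) := by
    simpa [← hstep] using ((tendsto_add_atTop_iff_nat 1).2 hL).sub_const 1
  have hxz := tendsto_sub_nhds_zero_of_uniformConvex hα hβ ht hr hxr hzr hw
  refine squeeze_zero (fun n => norm_nonneg _) (fun n => ?_) (by simpa using hxz.norm)
  rw [hx, show ∀ a b : E, t n • a + (1 - t n) • b - a = (1 - t n) • (b - a) from
    fun a b => by module, norm_smul_of_nonneg (ht1 n), norm_sub_rev]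
  exact mul_le_of_le_one_left (norm_nonneg _) (by linarith [ht0 n])

theorem Convex.smul_add_sum_mem {E : Type*} [AddCommGroup E] [Module ℝ E] {s : Set E}
    (hs : Convex ℝ s) {m : ℕ} {w : Fin (m + 1) → ℝ} (hw0 : ∀ j, 0 ≤ w j) (hw1 : ∑ j, w j = 1)
    {x₀ : E} {u : Fin m → E} (hx₀ : x₀ ∈ s) (hu : ∀ i, u i ∈ s) :
    w 0 • x₀ + ∑ i, w i.succ • u i ∈ s := by
  simpa [Fin.sum_univ_succ] using
    hs.sum_mem (fun j _ => hw0 j) hw1 (z := Fin.cons x₀ u) fun j _ => Fin.cases hx₀ hu j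

theorem Convex.exists_sum_smul_eq_smul {E : Type*} [AddCommGroup E] [Module ℝ E] {s : Set E}
    (hs : Convex ℝ s) {m : ℕ} {w : Fin (m + 1) → ℝ} (hw0 : ∀ j, 0 ≤ w j) (hw1 : ∑ j, w j = 1)
    (hlt : w 0 < 1) {u : Fin m → E} (hu : ∀ i, u i ∈ s) :
    ∃ z ∈ s, ∑ i, w i.succ • u i = (1 - w 0) • z := by
  have hsum : ∑ i : Fin m, w i.succ = 1 - w 0 := by rw [Fin.sum_univ_succ] at hw1; linarith
  have hne : 1 - w 0 ≠ 0 := by linarith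
  refine ⟨∑ i : Fin m, ((1 - w 0)⁻¹ * w i.succ) • u i,
    hs.sum_mem (fun i _ => mul_nonneg (inv_nonneg.2 (by linarith)) (hw0 _))
      (by rw [← Finset.mul_sum, hsum, inv_mul_cancel₀ hne]) fun i _ => hu i, ?_⟩
  simp only [Finset.smul_sum, smul_smul, ← mul_assoc, mul_inv_cancel₀ hne, one_mul]

theorem add_one_le_exp_mul_add_one_of_le_gauge {φ : ℝ → ℝ} (hφ : MonotoneOn φ (Set.Ici 0))
    {M Ms : ℝ} (hM : 0 ≤ M) (hMs : 0 ≤ Ms) (hφM : 0 ≤ φ M)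
    (hφbound : ∀ ξ, M ≤ ξ → φ ξ ≤ Ms * ξ) {s t κ l ε : ℝ} (ht : 0 ≤ t) (hκ : 0 ≤ κ)
    (hl : 0 ≤ l) (h : s ≤ t + κ * φ t + l) (hε : κ * (Ms + φ M) + l ≤ ε) :
    s + 1 ≤ Real.exp ε * (t + 1) := by
  have hφt : φ t ≤ φ M + Ms * t := by
    rcases le_total t M with htM | hMt
    · linarith [hφ ht hM htM, mul_nonneg hMs ht]
    · linarith [hφbound t hMt]
  have hκMs : κ * Ms ≤ ε := by nlinarith [mul_nonneg hκ hφM]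
  calc s + 1 ≤ (1 + ε) * (t + 1) := by
        nlinarith [mul_le_mul_of_nonneg_left hφt hκ, mul_le_mul_of_nonneg_right hκMs ht]
    _ ≤ Real.exp ε * (t + 1) := by
        gcongr
        linarith [Real.add_one_le_exp ε]

theorem norm_smul_add_sum_sub_le {E : Type*} [SeminormedAddCommGroup E] [NormedSpace ℝ E]
    {m : ℕ} {w : Fin (m + 1) → ℝ} (hw0 : ∀ j, 0 ≤ w j) (hw1 : ∑ j, w j = 1) {x₀ p : E}
    {u : Fin m → E} {R : ℝ} (hx₀ : ‖x₀ - p‖ ≤ R) (hu : ∀ i, ‖u i - p‖ ≤ R) :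
    ‖w 0 • x₀ + ∑ i, w i.succ • u i - p‖ ≤ R := by
  simp_rw [← mem_closedBall_iff_norm] at hx₀ hu ⊢
  exact (convex_closedBall p R).smul_add_sum_mem hw0 hw1 hx₀ hu

theorem iterates_mem_of_scheme {X : Type*} [AddCommGroup X] [Module ℝ X] {K : Set X}
    (hKco : Convex ℝ K) {m : ℕ} {T I : Fin m → X → X}
    (hTK : ∀ i, Set.MapsTo (T i) K K) (hIK : ∀ i, Set.MapsTo (I i) K K)
    {a b : Fin (m + 1) → ℕ → ℝ} (ha0 : ∀ j n, 0 ≤ a j n) (hb0 : ∀ j n, 0 ≤ b j n)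
    (hasum : ∀ n, ∑ j, a j n = 1) (hbsum : ∀ n, ∑ j, b j n = 1)
    {x y : ℕ → X} (hx0 : x 0 ∈ K)
    (hy : ∀ n, y n = b 0 n • x n + ∑ i : Fin m, b i.succ n • (I i)^[n] (x n))
    (hxrec : ∀ n, x (n + 1) = a 0 n • x n + ∑ i : Fin m, a i.succ n • (T i)^[n] (y n)) :
    ∀ n, x n ∈ K ∧ y n ∈ K := by
  have hyK : ∀ n, x n ∈ K → y n ∈ K := fun n hx => by
    rw [hy n]
    exact hKco.smul_add_sum_mem (fun j => hb0 j n) (hbsum n) hx fun i => (hIK i).iterate n hx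
  intro n
  induction n with
  | zero => exact ⟨hx0, hyK 0 hx0⟩
  | succ n ih =>
    have hxK : x (n + 1) ∈ K := by
      rw [hxrec n]
      exact hKco.smul_add_sum_mem (fun j => ha0 j n) (hasum n) ih.1
        fun i => (hTK i).iterate n ih.2
    exact ⟨hxK, hyK _ hxK⟩

theorem tendsto_norm_succ_sub_of_scheme {X : Type*} [NormedAddCommGroup X] [NormedSpace ℝ X]
    [UniformConvexSpace X] {K : Set X} (hKco : Convex ℝ K) {m : ℕ} (T I : Fin m → X → X)
    (hTK : ∀ i, Set.MapsTo (T i) K K) (hIK : ∀ i, Set.MapsTo (I i) K K) {p : X} {e : ℕ → ℝ}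
    (he0 : ∀ n, 0 ≤ e n) (he : Summable e)
    (hI : ∀ i, ∀ n, 1 ≤ n → ∀ z ∈ K,
      ‖(I i)^[n] z - p‖ + 1 ≤ Real.exp (e n) * (‖z - p‖ + 1))
    (hT : ∀ i, ∀ n, 1 ≤ n → ∀ z ∈ K,
      ‖(T i)^[n] z - p‖ + 1 ≤ Real.exp (e n) * (‖(I i)^[n] z - p‖ + 1))
    {alo ahi : ℝ} (halo : 0 < alo) (hahi1 : ahi < 1) {a b : Fin (m + 1) → ℕ → ℝ}
    (ha : ∀ j n, a j n ∈ Set.Icc alo ahi) (hb0 : ∀ j n, 0 ≤ b j n)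
    (hasum : ∀ n, ∑ j, a j n = 1) (hbsum : ∀ n, ∑ j, b j n = 1)
    {x y : ℕ → X} (hx0 : x 0 ∈ K)
    (hy : ∀ n, y n = b 0 n • x n + ∑ i : Fin m, b i.succ n • (I i)^[n] (x n))
    (hxrec : ∀ n, x (n + 1) = a 0 n • x n + ∑ i : Fin m, a i.succ n • (T i)^[n] (y n)) :
    Tendsto (fun n => ‖x (n + 1) - x n‖) atTop (𝓝 0) := by
  have ha0 : ∀ j n, 0 ≤ a j n := fun j n => halo.le.trans (ha j n).1
  have hK := iterates_mem_of_scheme hKco hTK hIK ha0 hb0 hasum hbsum hx0 hy hxrec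
  have hy_le : ∀ n, 1 ≤ n → ‖y n - p‖ + 1 ≤ Real.exp (e n) * (‖x n - p‖ + 1) := by
    intro n hn
    have hexp := Real.one_le_exp (he0 n)
    have := hy n ▸ norm_smul_add_sum_sub_le (fun j => hb0 j n) (hbsum n)
      (R := Real.exp (e n) * (‖x n - p‖ + 1) - 1) (by nlinarith [norm_nonneg (x n - p)])
      fun i => by linarith [hI i n hn _ (hK n).1]
    linarith
  have hTy_le : ∀ n, 1 ≤ n → ∀ i, ‖(T i)^[n] (y n) - p‖ + 1 ≤
      Real.exp (3 * e n) * (‖x n - p‖ + 1) := by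
    intro n hn i
    calc ‖(T i)^[n] (y n) - p‖ + 1
        ≤ Real.exp (e n) * (Real.exp (e n) * (Real.exp (e n) * (‖x n - p‖ + 1))) := by
          refine (hT i n hn _ (hK n).2).trans ?_
          gcongr
          exact (hI i n hn _ (hK n).2).trans (by gcongr; exact hy_le n hn)
      _ = Real.exp (3 * e n) * (‖x n - p‖ + 1) := by
          rw [show 3 * e n = e n + e n + e n by ring, Real.exp_add, Real.exp_add]; ring
  have hz : ∀ n, ∃ z, ‖z - p‖ + 1 ≤ Real.exp (3 * e (n + 1)) * (‖x (n + 1) - p‖ + 1) ∧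
      x (n + 1 + 1) = a 0 (n + 1) • x (n + 1) + (1 - a 0 (n + 1)) • z := by
    intro n
    obtain ⟨z, hzp, hz⟩ := (convex_closedBall p
        (Real.exp (3 * e (n + 1)) * (‖x (n + 1) - p‖ + 1) - 1)).exists_sum_smul_eq_smul
      (u := fun i => (T i)^[n + 1] (y (n + 1))) (fun j => ha0 j (n + 1)) (hasum (n + 1))
      ((ha 0 (n + 1)).2.trans_lt hahi1)
      fun i => by rw [mem_closedBall_iff_norm]; linarith [hTy_le (n + 1) (by omega) i]
    rw [mem_closedBall_iff_norm] at hzp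
    exact ⟨z, by linarith, by rw [hxrec, hz]⟩
  choose z hzp hxz using hz
  exact (tendsto_add_atTop_iff_nat 1).1 <| tendsto_norm_succ_sub_of_mann halo hahi1
    (fun n => ha 0 (n + 1)) (fun n => by linarith [he0 (n + 1)])
    ((summable_nat_add_iff 1).2 (he.mul_left 3)) hxz hzp

theorem stmt10_general
    {X : Type*} [NormedAddCommGroup X] [NormedSpace ℝ X]
    [UniformConvexSpace X]
    {K : Set X} (hKco : Convex ℝ K)
    {m : ℕ}
    (T I : Fin m → X → X)
    (hTK : ∀ i, Set.MapsTo (T i) K K) (hIK : ∀ i, Set.MapsTo (I i) K K)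
    (μ lam tμ tlam : Fin m → ℕ → ℝ)
    (hμ0 : ∀ i n, 0 ≤ μ i n) (hlam0 : ∀ i n, 0 ≤ lam i n)
    (htμ0 : ∀ i n, 0 ≤ tμ i n) (htlam0 : ∀ i n, 0 ≤ tlam i n)
    (hμsum : ∀ i, Summable (μ i)) (hlamsum : ∀ i, Summable (lam i))
    (htμsum : ∀ i, Summable (tμ i)) (htlamsum : ∀ i, Summable (tlam i))
    (φ ψ : Fin m → ℝ → ℝ)
    (hφmono : ∀ i, StrictMonoOn (φ i) (Set.Ici 0))
    (hφpos : ∀ i t, 0 ≤ t → 0 ≤ φ i t)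
    (hψmono : ∀ i, StrictMonoOn (ψ i) (Set.Ici 0))
    (hψpos : ∀ i t, 0 ≤ t → 0 ≤ ψ i t)
    (hI : ∀ i, ∀ n, 1 ≤ n → ∀ x ∈ K, ∀ y ∈ K,
      ‖(I i)^[n] x - (I i)^[n] y‖ ≤ ‖x - y‖ + tμ i n * ψ i ‖x - y‖ + tlam i n)
    (hT : ∀ i, ∀ n, 1 ≤ n → ∀ x ∈ K, ∀ y ∈ K,
      ‖(T i)^[n] x - (T i)^[n] y‖ ≤
        ‖(I i)^[n] x - (I i)^[n] y‖ + μ i n * φ i ‖(I i)^[n] x - (I i)^[n] y‖ + lam i n)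
    (F : Set X)
    (hFdef : ∀ p, p ∈ F ↔ p ∈ K ∧ ∀ i, T i p = p ∧ I i p = p)
    (hFne : F.Nonempty)
    (M Ms N Ns : Fin m → ℝ)
    (hM : ∀ i, 0 < M i) (hMs : ∀ i, 0 < Ms i) (hN : ∀ i, 0 < N i) (hNs : ∀ i, 0 < Ns i)
    (hφbound : ∀ i ξ, M i ≤ ξ → φ i ξ ≤ Ms i * ξ)
    (hψbound : ∀ i ζ, N i ≤ ζ → ψ i ζ ≤ Ns i * ζ)
    (alo ahi blo bhi : ℝ)
    (halo : 0 < alo) (hahi1 : ahi < 1)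
    (hblo : 0 < blo)
    (a b : Fin (m + 1) → ℕ → ℝ)
    (ha : ∀ j n, a j n ∈ Set.Icc alo ahi) (hb : ∀ j n, b j n ∈ Set.Icc blo bhi)
    (hasum : ∀ n, ∑ j, a j n = 1) (hbsum : ∀ n, ∑ j, b j n = 1)
    (x y : ℕ → X) (hx0 : x 0 ∈ K)
    (hy : ∀ n, y n = b 0 n • x n + ∑ i : Fin m, b i.succ n • (I i)^[n] (x n))
    (hxrec : ∀ n, x (n + 1) = a 0 n • x n + ∑ i : Fin m, a i.succ n • (T i)^[n] (y n))
    : Tendsto (fun n => ‖x (n + 1) - x n‖) atTop (nhds 0) := by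
  obtain ⟨p, hp⟩ := hFne
  obtain ⟨hpK, hpfix⟩ := (hFdef p).1 hp
  have hIerr : ∀ i n, 0 ≤ tμ i n * (Ns i + ψ i (N i)) + tlam i n := fun i n =>
    add_nonneg (mul_nonneg (htμ0 i n) (add_nonneg (hNs i).le (hψpos i _ (hN i).le))) (htlam0 i n)
  have hTerr : ∀ i n, 0 ≤ μ i n * (Ms i + φ i (M i)) + lam i n := fun i n =>
    add_nonneg (mul_nonneg (hμ0 i n) (add_nonneg (hMs i).le (hφpos i _ (hM i).le))) (hlam0 i n)
  set f : Fin m → ℕ → ℝ := fun i n =>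
    (tμ i n * (Ns i + ψ i (N i)) + tlam i n) + (μ i n * (Ms i + φ i (M i)) + lam i n)
  have hf_le : ∀ i n, f i n ≤ ∑ j, f j n := fun i n =>
    Finset.single_le_sum (fun j _ => add_nonneg (hIerr j n) (hTerr j n)) (Finset.mem_univ i)
  refine tendsto_norm_succ_sub_of_scheme hKco T I hTK hIK (p := p) (e := fun n => ∑ i, f i n)
    (fun n => Finset.sum_nonneg fun i _ => add_nonneg (hIerr i n) (hTerr i n))
    (summable_sum fun i _ => (((htμsum i).mul_right _).add (htlamsum i)).add
      (((hμsum i).mul_right _).add (hlamsum i)))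
    (fun i n hn z hz => ?_) (fun i n hn z hz => ?_) halo hahi1 ha
    (fun j n => hblo.le.trans (hb j n).1) hasum hbsum hx0 hy hxrec
  · have h := hI i n hn z hz p hpK
    rw [Function.iterate_fixed (hpfix i).2] at h
    exact add_one_le_exp_mul_add_one_of_le_gauge (hψmono i).monotoneOn (hN i).le (hNs i).le
      (hψpos i _ (hN i).le) (hψbound i) (norm_nonneg _) (htμ0 i n) (htlam0 i n) h
      (by linarith [hf_le i n, hTerr i n])
  · have h := hT i n hn z hz p hpK
    rw [Function.iterate_fixed (hpfix i).1, Function.iterate_fixed (hpfix i).2] at h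
    exact add_one_le_exp_mul_add_one_of_le_gauge (hφmono i).monotoneOn (hM i).le (hMs i).le
      (hφpos i _ (hM i).le) (hφbound i) (norm_nonneg _) (hμ0 i n) (hlam0 i n) h
      (by linarith [hf_le i n, hIerr i n])

/-- under the bounded-coefficient scheme hypotheses with all maps
continuous, `lim ‖x (n+1) - x n‖ = 0`. -/
theorem stmt10
    {X : Type*} [NormedAddCommGroup X] [NormedSpace ℝ X] [CompleteSpace X]
    [UniformConvexSpace X]
    {K : Set X} (hKne : K.Nonempty) (hKcl : IsClosed K) (hKco : Convex ℝ K)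
    {m : ℕ} (hm : 1 ≤ m)
    (T I : Fin m → X → X)
    (hTK : ∀ i, Set.MapsTo (T i) K K) (hIK : ∀ i, Set.MapsTo (I i) K K)
    (hTcont : ∀ i, ContinuousOn (T i) K) (hIcont : ∀ i, ContinuousOn (I i) K)
    (μ lam tμ tlam : Fin m → ℕ → ℝ)
    (hμ0 : ∀ i n, 0 ≤ μ i n) (hlam0 : ∀ i n, 0 ≤ lam i n)
    (htμ0 : ∀ i n, 0 ≤ tμ i n) (htlam0 : ∀ i n, 0 ≤ tlam i n)
    (hμlim : ∀ i, Tendsto (μ i) atTop (nhds 0)) (hlamlim : ∀ i, Tendsto (lam i) atTop (nhds 0))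
    (htμlim : ∀ i, Tendsto (tμ i) atTop (nhds 0))
    (htlamlim : ∀ i, Tendsto (tlam i) atTop (nhds 0))
    (hμsum : ∀ i, Summable (μ i)) (hlamsum : ∀ i, Summable (lam i))
    (htμsum : ∀ i, Summable (tμ i)) (htlamsum : ∀ i, Summable (tlam i))
    (φ ψ : Fin m → ℝ → ℝ)
    (hφmono : ∀ i, StrictMonoOn (φ i) (Set.Ici 0))
    (hφcont : ∀ i, ContinuousOn (φ i) (Set.Ici 0))
    (hφ0 : ∀ i, φ i 0 = 0) (hφpos : ∀ i t, 0 ≤ t → 0 ≤ φ i t)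
    (hψmono : ∀ i, StrictMonoOn (ψ i) (Set.Ici 0))
    (hψcont : ∀ i, ContinuousOn (ψ i) (Set.Ici 0))
    (hψ0 : ∀ i, ψ i 0 = 0) (hψpos : ∀ i t, 0 ≤ t → 0 ≤ ψ i t)
    (hI : ∀ i, ∀ n, 1 ≤ n → ∀ x ∈ K, ∀ y ∈ K,
      ‖(I i)^[n] x - (I i)^[n] y‖ ≤ ‖x - y‖ + tμ i n * ψ i ‖x - y‖ + tlam i n)
    (hT : ∀ i, ∀ n, 1 ≤ n → ∀ x ∈ K, ∀ y ∈ K,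
      ‖(T i)^[n] x - (T i)^[n] y‖ ≤
        ‖(I i)^[n] x - (I i)^[n] y‖ + μ i n * φ i ‖(I i)^[n] x - (I i)^[n] y‖ + lam i n)
    (F : Set X)
    (hFdef : ∀ p, p ∈ F ↔ p ∈ K ∧ ∀ i, T i p = p ∧ I i p = p)
    (hFne : F.Nonempty)
    (M Ms N Ns : Fin m → ℝ)
    (hM : ∀ i, 0 < M i) (hMs : ∀ i, 0 < Ms i) (hN : ∀ i, 0 < N i) (hNs : ∀ i, 0 < Ns i)
    (hφbound : ∀ i ξ, M i ≤ ξ → φ i ξ ≤ Ms i * ξ)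
    (hψbound : ∀ i ζ, N i ≤ ζ → ψ i ζ ≤ Ns i * ζ)
    (alo ahi blo bhi : ℝ)
    (halo : 0 < alo) (hahi : alo < ahi) (hahi1 : ahi < 1)
    (hblo : 0 < blo) (hbhi : blo < bhi) (hbhi1 : bhi < 1)
    (a b : Fin (m + 1) → ℕ → ℝ)
    (ha : ∀ j n, a j n ∈ Set.Icc alo ahi) (hb : ∀ j n, b j n ∈ Set.Icc blo bhi)
    (hasum : ∀ n, ∑ j, a j n = 1) (hbsum : ∀ n, ∑ j, b j n = 1)
    (x y : ℕ → X) (hx0 : x 0 ∈ K)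
    (hy : ∀ n, y n = b 0 n • x n + ∑ i : Fin m, b i.succ n • (I i)^[n] (x n))
    (hxrec : ∀ n, x (n + 1) = a 0 n • x n + ∑ i : Fin m, a i.succ n • (T i)^[n] (y n))
    : Tendsto (fun n => ‖x (n + 1) - x n‖) atTop (nhds 0) :=
  stmt10_general hKco T I hTK hIK μ lam tμ tlam hμ0 hlam0 htμ0 htlam0 hμsum hlamsum htμsum htlamsum
    φ ψ hφmono hφpos hψmono hψpos hI hT F hFdef hFne M Ms N Ns hM hMs hN hNs hφbound hψbound alo ahi
    blo bhi halo hahi1 hblo a b ha hb hasum hbsum x y hx0 hy hxrec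
end

section
/- Under the Bounded-Coefficient Scheme Hypotheses, assume additionally that all the maps T_1, …, T_m and I_1, …, I_m are continuous. Then for each common fixed point p ∈ F, the limit lim_{n→∞} ‖y_n − p‖ exists and equals lim_{n→∞} ‖x_n − p‖. -/
/-!
At a common fixed point `p`, the total asymptotic estimates and the linear growth of the gauges
give `‖Iⁿ z - p‖ ≤ (1 + cₙ) ‖z - p‖ + dₙ`, and likewise for `Tⁿ`, with summable `cₙ, dₙ`.
Taking norms in the scheme, `uₙ = ‖xₙ - p‖` and `vₙ = ‖yₙ - p‖` satisfy
`vₙ ≤ (1 + Pₙ) uₙ + Qₙ` and `uₙ₊₁ ≤ aₙ uₙ + (1 - aₙ + Rₙ) vₙ + Sₙ` with summable `P, Q, R, S`.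
Together these give `uₙ₊₁ ≤ (1 + gₙ) uₙ + hₙ` with summable `g, h`, so `uₙ` converges to
some `L`. The first inequality gives `limsup vₙ ≤ L`; since `aₙ ≤ α^* < 1`, the second forces
`liminf vₙ ≥ L`.
-/

open Filter Topology

theorem Summable.mul_summable {ι : Type*} {f g : ι → ℝ} (hf : Summable f) (hg : Summable g) :
    Summable fun n => f n * g n :=
  hf.norm.mul_tendsto_const hg.tendsto_cofinite_zero

theorem exists_tendsto_of_le_add_of_bddBelow {u e : ℕ → ℝ} (hu : BddBelow (Set.range u))
    (he0 : ∀ n, 0 ≤ e n) (he : Summable e) (hrec : ∀ n, u (n + 1) ≤ u n + e n) :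
    ∃ L, Tendsto u atTop (𝓝 L) := by
  set s : ℕ → ℝ := fun n => ∑ k ∈ Finset.range n, e k with hs
  have hanti : Antitone fun n => u n - s n := antitone_nat_of_succ_le fun n => by
    simp only [hs, Finset.sum_range_succ]
    linarith [hrec n]
  obtain ⟨B, hB⟩ := hu
  have hbdd : BddBelow (Set.range fun n => u n - s n) := ⟨B - ∑' k, e k, by
    rintro _ ⟨n, rfl⟩
    linarith [hB ⟨n, rfl⟩, he.sum_le_tsum (Finset.range n) fun k _ => he0 k]⟩
  refine ⟨_, ((tendsto_atTop_ciInf hanti hbdd).add he.hasSum.tendsto_sum_nat).congr fun n => ?_⟩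
  simp [hs]

theorem bddAbove_range_of_le_one_add_mul_add {u g h : ℕ → ℝ} (hg0 : ∀ n, 0 ≤ g n)
    (hg : Summable g) (hh0 : ∀ n, 0 ≤ h n) (hh : Summable h)
    (hrec : ∀ n, u (n + 1) ≤ (1 + g n) * u n + h n) :
    BddAbove (Set.range u) := by
  have key : ∀ n, u n ≤
      (∏ k ∈ Finset.range n, (1 + g k)) * (|u 0| + ∑ k ∈ Finset.range n, h k) := by
    intro n
    induction n with
    | zero => simp [le_abs_self]
    | succ n ih =>
      rw [Finset.prod_range_succ, Finset.sum_range_succ, ← add_assoc]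
      set π := ∏ k ∈ Finset.range n, (1 + g k)
      have hπ : 1 ≤ π * (1 + g n) :=
        one_le_mul_of_one_le_of_one_le
          (Finset.one_le_prod fun k _ => le_add_of_nonneg_right (hg0 k))
          (le_add_of_nonneg_right (hg0 n))
      calc u (n + 1) ≤ (1 + g n) * u n + h n := hrec n
        _ ≤ (1 + g n) * (π * (|u 0| + ∑ k ∈ Finset.range n, h k)) + h n := by
          gcongr
          linarith [hg0 n]
        _ ≤ π * (1 + g n) * (|u 0| + ∑ k ∈ Finset.range n, h k + h n) := by
          nlinarith [mul_le_mul_of_nonneg_right hπ (hh0 n)]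
  refine ⟨Real.exp (∑' k, g k) * (|u 0| + ∑' k, h k), ?_⟩
  rintro _ ⟨n, rfl⟩
  refine (key n).trans (mul_le_mul ?_ ?_ ?_ (Real.exp_pos _).le)
  · exact (Real.prod_one_add_le_exp_sum _ hg0).trans
      (Real.exp_le_exp.2 (hg.sum_le_tsum _ fun k _ => hg0 k))
  · exact add_le_add le_rfl (hh.sum_le_tsum _ fun k _ => hh0 k)
  · exact add_nonneg (abs_nonneg _) (Finset.sum_nonneg fun k _ => hh0 k)

theorem exists_tendsto_of_le_one_add_mul_add {u g h : ℕ → ℝ} (hu0 : ∀ n, 0 ≤ u n)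
    (hg0 : ∀ n, 0 ≤ g n) (hg : Summable g) (hh0 : ∀ n, 0 ≤ h n) (hh : Summable h)
    (hrec : ∀ᶠ n in atTop, u (n + 1) ≤ (1 + g n) * u n + h n) :
    ∃ L, Tendsto u atTop (𝓝 L) := by
  obtain ⟨N, hN⟩ := eventually_atTop.1 hrec
  have hrecN : ∀ n, u (n + 1 + N) ≤ (1 + g (n + N)) * u (n + N) + h (n + N) := fun n => by
    rw [Nat.add_right_comm]
    exact hN _ (Nat.le_add_left N n)
  have hgN := (summable_nat_add_iff N).2 hg
  have hhN := (summable_nat_add_iff N).2 hh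
  obtain ⟨B, hB⟩ := bddAbove_range_of_le_one_add_mul_add (u := fun n => u (n + N))
    (fun n => hg0 _) hgN (fun n => hh0 _) hhN hrecN
  have hB0 : 0 ≤ B := (hu0 N).trans (by simpa using hB ⟨0, rfl⟩)
  obtain ⟨L, hL⟩ := exists_tendsto_of_le_add_of_bddBelow (u := fun n => u (n + N))
    (e := fun n => g (n + N) * B + h (n + N)) ⟨0, by rintro _ ⟨n, rfl⟩; exact hu0 _⟩
    (fun n => add_nonneg (mul_nonneg (hg0 _) hB0) (hh0 _)) ((hgN.mul_right B).add hhN)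
    fun n => by nlinarith [hrecN n, mul_le_mul_of_nonneg_left (hB ⟨n, rfl⟩) (hg0 (n + N))]
  exact ⟨L, (tendsto_add_atTop_iff_nat N).1 hL⟩

theorem tendsto_of_coupled_le {u v a P Q R S : ℕ → ℝ} {A L : ℝ} (hA : A < 1)
    (ha0 : ∀ n, 0 ≤ a n) (haA : ∀ n, a n ≤ A) (hR0 : ∀ n, 0 ≤ R n) (hS0 : ∀ n, 0 ≤ S n)
    (hP : Tendsto P atTop (𝓝 0)) (hQ : Tendsto Q atTop (𝓝 0)) (hR : Tendsto R atTop (𝓝 0))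
    (hS : Tendsto S atTop (𝓝 0)) (hL : Tendsto u atTop (𝓝 L))
    (hv : ∀ᶠ n in atTop, v n ≤ (1 + P n) * u n + Q n)
    (hu : ∀ᶠ n in atTop, u (n + 1) ≤ a n * u n + (1 - a n + R n) * v n + S n) :
    Tendsto v atTop (𝓝 L) := by
  set E : ℕ → ℝ := fun n => |u (n + 1) - L| + |u n - L| + R n * |L| + S n with hE
  have hE0 : Tendsto E atTop (𝓝 0) := by
    have h := (hL.sub_const L).abs
    rw [sub_self, abs_zero] at h
    simpa using (((h.comp (tendsto_add_atTop_nat 1)).add h).add (hR.mul_const |L|)).add hS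
  have hlo : Tendsto (fun n => L - E n / (1 - A)) atTop (𝓝 L) := by
    simpa using tendsto_const_nhds.sub (hE0.div_const (1 - A))
  have hhi : Tendsto (fun n => (1 + P n) * u n + Q n) atTop (𝓝 L) := by
    simpa using ((hP.const_add 1).mul hL).add hQ
  refine tendsto_of_tendsto_of_tendsto_of_le_of_le' hlo hhi ?_ hv
  filter_upwards [hu] with n hun
  have hEn : 0 ≤ E n := by
    have := mul_nonneg (hR0 n) (abs_nonneg L)
    simp only [hE]
    linarith [abs_nonneg (u (n + 1) - L), abs_nonneg (u n - L), hS0 n]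
  rw [sub_le_comm, le_div_iff₀ (by linarith)]
  rcases le_or_gt L (v n) with hvL | hvL
  · nlinarith
  · have h1 := mul_le_mul_of_nonneg_left (by linarith [haA n, hR0 n] : 1 - A ≤ 1 - a n + R n)
      (by linarith : 0 ≤ L - v n)
    have h2 : a n * (u n - L) ≤ |u n - L| :=
      (mul_le_mul_of_nonneg_left (le_abs_self _) (ha0 n)).trans
        (mul_le_of_le_one_left (abs_nonneg _) (by linarith [haA n]))
    nlinarith [neg_abs_le (u (n + 1) - L), mul_le_mul_of_nonneg_left (le_abs_self L) (hR0 n)]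

theorem exists_common_limit_of_coupled_le {u v a P Q R S : ℕ → ℝ} {A : ℝ} (hA : A < 1)
    (hu0 : ∀ n, 0 ≤ u n) (ha0 : ∀ n, 0 ≤ a n) (haA : ∀ n, a n ≤ A)
    (hP0 : ∀ n, 0 ≤ P n) (hQ0 : ∀ n, 0 ≤ Q n) (hR0 : ∀ n, 0 ≤ R n) (hS0 : ∀ n, 0 ≤ S n)
    (hP : Summable P) (hQ : Summable Q) (hR : Summable R) (hS : Summable S)
    (hv : ∀ᶠ n in atTop, v n ≤ (1 + P n) * u n + Q n)
    (hu : ∀ᶠ n in atTop, u (n + 1) ≤ a n * u n + (1 - a n + R n) * v n + S n) :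
    ∃ L, Tendsto u atTop (𝓝 L) ∧ Tendsto v atTop (𝓝 L) := by
  have hrec : ∀ᶠ n in atTop,
      u (n + 1) ≤ (1 + (P n + R n + P n * R n)) * u n + ((1 + R n) * Q n + S n) := by
    filter_upwards [hv, hu] with n hvn hun
    have := mul_le_mul_of_nonneg_left hvn (by linarith [haA n, hR0 n] : 0 ≤ 1 - a n + R n)
    nlinarith [mul_nonneg (mul_nonneg (ha0 n) (hP0 n)) (hu0 n), mul_nonneg (ha0 n) (hQ0 n)]
  obtain ⟨L, hL⟩ := exists_tendsto_of_le_one_add_mul_add hu0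
    (fun n => add_nonneg (add_nonneg (hP0 n) (hR0 n)) (mul_nonneg (hP0 n) (hR0 n)))
    ((hP.add hR).add (hP.mul_summable hR))
    (fun n => add_nonneg (mul_nonneg (by linarith [hR0 n]) (hQ0 n)) (hS0 n))
    (((hQ.add (hR.mul_summable hQ)).congr fun n => by ring).add hS) hrec
  exact ⟨L, hL, tendsto_of_coupled_le hA ha0 haA hR0 hS0 hP.tendsto_atTop_zero
    hQ.tendsto_atTop_zero hR.tendsto_atTop_zero hS.tendsto_atTop_zero hL hv hu⟩

theorem add_mul_gauge_le {φ : ℝ → ℝ} {M Ms : ℝ} (hφ : MonotoneOn φ (Set.Ici 0)) (hM : 0 ≤ M)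
    (hMs : 0 ≤ Ms) (hφM : 0 ≤ φ M) (hφ_le : ∀ ξ, M ≤ ξ → φ ξ ≤ Ms * ξ) {μ ν r : ℝ}
    (hμ : 0 ≤ μ) (hr : 0 ≤ r) :
    r + μ * φ r + ν ≤ (1 + μ * Ms) * r + (μ * φ M + ν) := by
  have hφr : φ r ≤ φ M + Ms * r := by
    rcases le_total r M with hrM | hMr
    · linarith [hφ hr hM hrM, mul_nonneg hMs hr]
    · linarith [hφ_le r hMr]
  nlinarith [mul_le_mul_of_nonneg_left hφr hμ]

section Scheme

variable {X : Type*} [NormedAddCommGroup X]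

def HasSummableAffineBound (K : Set X) (p : X) (F G : ℕ → X → X) : Prop :=
  ∃ c d : ℕ → ℝ, (∀ n, 0 ≤ c n) ∧ (∀ n, 0 ≤ d n) ∧ Summable c ∧ Summable d ∧
    ∀ᶠ n in atTop, ∀ z ∈ K, ‖F n z - p‖ ≤ (1 + c n) * ‖G n z - p‖ + d n

namespace HasSummableAffineBound

variable {K : Set X} {p : X} {F G H : ℕ → X → X}

theorem trans (hFG : HasSummableAffineBound K p F G) (hGH : HasSummableAffineBound K p G H) :
    HasSummableAffineBound K p F H := by
  obtain ⟨c, d, hc0, hd0, hc, hd, hFG⟩ := hFG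
  obtain ⟨c', d', hc0', hd0', hc', hd', hGH⟩ := hGH
  refine ⟨fun n => c n + c' n + c n * c' n, fun n => (1 + c n) * d' n + d n,
    fun n => add_nonneg (add_nonneg (hc0 n) (hc0' n)) (mul_nonneg (hc0 n) (hc0' n)),
    fun n => add_nonneg (mul_nonneg (by linarith [hc0 n]) (hd0' n)) (hd0 n),
    (hc.add hc').add (hc.mul_summable hc'),
    ((hd'.add (hc.mul_summable hd')).congr fun n => by ring).add hd, ?_⟩
  filter_upwards [hFG, hGH] with n hFGn hGHn z hz
  calc ‖F n z - p‖ ≤ (1 + c n) * ‖G n z - p‖ + d n := hFGn z hz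
    _ ≤ (1 + c n) * ((1 + c' n) * ‖H n z - p‖ + d' n) + d n := by
      gcongr
      · linarith [hc0 n]
      · exact hGHn z hz
    _ = (1 + (c n + c' n + c n * c' n)) * ‖H n z - p‖ + ((1 + c n) * d' n + d n) := by ring

theorem of_le_add_mul_gauge (hp : p ∈ K) (hFp : ∀ n, F n p = p) (hGp : ∀ n, G n p = p)
    {μ ν : ℕ → ℝ} (hμ0 : ∀ n, 0 ≤ μ n) (hν0 : ∀ n, 0 ≤ ν n) (hμ : Summable μ)
    (hν : Summable ν) {φ : ℝ → ℝ} {M Ms : ℝ} (hφ : MonotoneOn φ (Set.Ici 0)) (hM : 0 ≤ M)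
    (hMs : 0 ≤ Ms) (hφM : 0 ≤ φ M) (hφ_le : ∀ ξ, M ≤ ξ → φ ξ ≤ Ms * ξ)
    (hFG : ∀ n, 1 ≤ n → ∀ x ∈ K, ∀ y ∈ K,
      ‖F n x - F n y‖ ≤ ‖G n x - G n y‖ + μ n * φ ‖G n x - G n y‖ + ν n) :
    HasSummableAffineBound K p F G := by
  refine ⟨fun n => μ n * Ms, fun n => μ n * φ M + ν n, fun n => mul_nonneg (hμ0 n) hMs,
    fun n => add_nonneg (mul_nonneg (hμ0 n) hφM) (hν0 n), hμ.mul_right Ms,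
    (hμ.mul_right _).add hν, eventually_atTop.2 ⟨1, fun n hn z hz => ?_⟩⟩
  have h := hFG n hn z hz p hp
  rw [hFp, hGp] at h
  exact h.trans (add_mul_gauge_le hφ hM hMs hφM hφ_le (hμ0 n) (norm_nonneg _))

end HasSummableAffineBound

variable [NormedSpace ℝ X]

theorem Convex.smul_add_sum_smul_mem {K : Set X} (hK : Convex ℝ K) {m : ℕ}
    {c : Fin (m + 1) → ℝ} (hc0 : ∀ j, 0 ≤ c j) (hc1 : ∑ j, c j = 1) {z : X} (hz : z ∈ K)
    {w : Fin m → X} (hw : ∀ i, w i ∈ K) :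
    c 0 • z + ∑ i, c i.succ • w i ∈ K := by
  have h := hK.sum_mem (t := Finset.univ) (w := c) (z := Fin.cons z w) (fun j _ => hc0 j) hc1
    fun j _ => by cases j using Fin.cases <;> simp [hz, hw]
  simpa [Fin.sum_univ_succ] using h

theorem norm_smul_add_sum_smul_sub_le {m : ℕ} {c : Fin (m + 1) → ℝ} (hc0 : ∀ j, 0 ≤ c j)
    (hc1 : ∑ j, c j = 1) {z p : X} {w : Fin m → X} {e f : Fin m → ℝ} {r : ℝ}
    (he0 : ∀ i, 0 ≤ e i) (hf0 : ∀ i, 0 ≤ f i) (hr : 0 ≤ r)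
    (hw : ∀ i, ‖w i - p‖ ≤ (1 + e i) * r + f i) :
    ‖c 0 • z + ∑ i, c i.succ • w i - p‖ ≤ c 0 * ‖z - p‖ + (1 - c 0 + ∑ i, e i) * r + ∑ i, f i := by
  have hc_le : ∀ j, c j ≤ 1 := fun j =>
    hc1 ▸ Finset.single_le_sum (fun j _ => hc0 j) (Finset.mem_univ j)
  rw [Fin.sum_univ_succ] at hc1
  have hdec : c 0 • z + ∑ i, c i.succ • w i - p = c 0 • (z - p) + ∑ i, c i.succ • (w i - p) := by
    simp only [smul_sub, Finset.sum_sub_distrib, ← Finset.sum_smul]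
    rw [sub_add_sub_comm, ← add_smul, hc1, one_smul]
  have hterm : ∀ i, c i.succ * ‖w i - p‖ ≤ c i.succ * r + (e i * r + f i) := fun i => by
    nlinarith [mul_le_mul_of_nonneg_left (hw i) (hc0 i.succ), hc_le i.succ,
      mul_nonneg (sub_nonneg.2 (hc_le i.succ)) (add_nonneg (mul_nonneg (he0 i) hr) (hf0 i))]
  calc ‖c 0 • z + ∑ i, c i.succ • w i - p‖
      ≤ c 0 * ‖z - p‖ + ∑ i, c i.succ * ‖w i - p‖ := by
        rw [hdec]
        refine norm_add_le_of_le (by rw [norm_smul, Real.norm_of_nonneg (hc0 0)])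
          (norm_sum_le_of_le _ fun i _ => by rw [norm_smul, Real.norm_of_nonneg (hc0 i.succ)])
    _ ≤ c 0 * ‖z - p‖ + ∑ i, (c i.succ * r + (e i * r + f i)) := by
        gcongr with i
        exact hterm i
    _ = c 0 * ‖z - p‖ + (1 - c 0 + ∑ i, e i) * r + ∑ i, f i := by
        simp only [Finset.sum_add_distrib, ← Finset.sum_mul]
        rw [← hc1]
        ring

theorem Convex.mem_of_ishikawa_scheme {K : Set X} (hK : Convex ℝ K) {m : ℕ}
    {S U : Fin m → ℕ → X → X} (hSK : ∀ i n, Set.MapsTo (S i n) K K)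
    (hUK : ∀ i n, Set.MapsTo (U i n) K K) {a b : Fin (m + 1) → ℕ → ℝ}
    (ha0 : ∀ j n, 0 ≤ a j n) (ha1 : ∀ n, ∑ j, a j n = 1)
    (hb0 : ∀ j n, 0 ≤ b j n) (hb1 : ∀ n, ∑ j, b j n = 1) {x y : ℕ → X} (hx0 : x 0 ∈ K)
    (hy : ∀ n, y n = b 0 n • x n + ∑ i, b i.succ n • U i n (x n))
    (hx : ∀ n, x (n + 1) = a 0 n • x n + ∑ i, a i.succ n • S i n (y n)) :
    ∀ n, x n ∈ K ∧ y n ∈ K := by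
  have hyK : ∀ n, x n ∈ K → y n ∈ K := fun n hxn =>
    hy n ▸ hK.smul_add_sum_smul_mem (hb0 · n) (hb1 n) hxn fun i => hUK i n hxn
  intro n
  induction n with
  | zero => exact ⟨hx0, hyK 0 hx0⟩
  | succ n ih =>
    have hxn : x (n + 1) ∈ K :=
      hx n ▸ hK.smul_add_sum_smul_mem (ha0 · n) (ha1 n) ih.1 fun i => hSK i n ih.2
    exact ⟨hxn, hyK _ hxn⟩

theorem exists_tendsto_norm_sub_of_ishikawa_scheme {K : Set X} {p : X} {m : ℕ}
    {S U : Fin m → ℕ → X → X} (hS : ∀ i, HasSummableAffineBound K p (S i) fun _ => id)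
    (hU : ∀ i, HasSummableAffineBound K p (U i) fun _ => id) {a b : Fin (m + 1) → ℕ → ℝ}
    {A : ℝ} (hA : A < 1) (ha0 : ∀ j n, 0 ≤ a j n) (haA : ∀ n, a 0 n ≤ A)
    (ha1 : ∀ n, ∑ j, a j n = 1) (hb0 : ∀ j n, 0 ≤ b j n) (hb1 : ∀ n, ∑ j, b j n = 1)
    {x y : ℕ → X} (hxK : ∀ n, x n ∈ K) (hyK : ∀ n, y n ∈ K)
    (hy : ∀ n, y n = b 0 n • x n + ∑ i, b i.succ n • U i n (x n))
    (hx : ∀ n, x (n + 1) = a 0 n • x n + ∑ i, a i.succ n • S i n (y n)) :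
    ∃ L, Tendsto (fun n => ‖x n - p‖) atTop (𝓝 L) ∧ Tendsto (fun n => ‖y n - p‖) atTop (𝓝 L) := by
  choose c d hc0 hd0 hc hd hU using hU
  choose c' d' hc0' hd0' hc' hd' hS using hS
  refine exists_common_limit_of_coupled_le (P := fun n => ∑ i, c i n) (Q := fun n => ∑ i, d i n)
    (R := fun n => ∑ i, c' i n) (S := fun n => ∑ i, d' i n) hA (fun n => norm_nonneg _) (ha0 0) haA
    (fun n => Finset.sum_nonneg fun i _ => hc0 i n) (fun n => Finset.sum_nonneg fun i _ => hd0 i n)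
    (fun n => Finset.sum_nonneg fun i _ => hc0' i n)
    (fun n => Finset.sum_nonneg fun i _ => hd0' i n) (summable_sum fun i _ => hc i)
    (summable_sum fun i _ => hd i) (summable_sum fun i _ => hc' i) (summable_sum fun i _ => hd' i)
    ?_ ?_
  · filter_upwards [eventually_all.2 hU] with n hUn
    rw [hy n]
    refine (norm_smul_add_sum_smul_sub_le (hb0 · n) (hb1 n) (fun i => hc0 i n) (fun i => hd0 i n)
      (r := ‖x n - p‖) (norm_nonneg _) fun i => hUn i (x n) (hxK n)).trans_eq ?_
    ring
  · filter_upwards [eventually_all.2 hS] with n hSn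
    rw [hx n]
    exact norm_smul_add_sum_smul_sub_le (ha0 · n) (ha1 n) (fun i => hc0' i n) (fun i => hd0' i n)
      (r := ‖y n - p‖) (norm_nonneg _) fun i => hSn i (y n) (hyK n)

end Scheme

theorem stmt11_general
    {X : Type*} [NormedAddCommGroup X] [NormedSpace ℝ X]
    {K : Set X} (hKco : Convex ℝ K)
    {m : ℕ}
    (T I : Fin m → X → X)
    (hTK : ∀ i, Set.MapsTo (T i) K K) (hIK : ∀ i, Set.MapsTo (I i) K K)
    (μ lam tμ tlam : Fin m → ℕ → ℝ)
    (hμ0 : ∀ i n, 0 ≤ μ i n) (hlam0 : ∀ i n, 0 ≤ lam i n)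
    (htμ0 : ∀ i n, 0 ≤ tμ i n) (htlam0 : ∀ i n, 0 ≤ tlam i n)
    (hμsum : ∀ i, Summable (μ i)) (hlamsum : ∀ i, Summable (lam i))
    (htμsum : ∀ i, Summable (tμ i)) (htlamsum : ∀ i, Summable (tlam i))
    (φ ψ : Fin m → ℝ → ℝ)
    (hφmono : ∀ i, StrictMonoOn (φ i) (Set.Ici 0))
    (hφpos : ∀ i t, 0 ≤ t → 0 ≤ φ i t)
    (hψmono : ∀ i, StrictMonoOn (ψ i) (Set.Ici 0))
    (hψpos : ∀ i t, 0 ≤ t → 0 ≤ ψ i t)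
    (hI : ∀ i, ∀ n, 1 ≤ n → ∀ x ∈ K, ∀ y ∈ K,
      ‖(I i)^[n] x - (I i)^[n] y‖ ≤ ‖x - y‖ + tμ i n * ψ i ‖x - y‖ + tlam i n)
    (hT : ∀ i, ∀ n, 1 ≤ n → ∀ x ∈ K, ∀ y ∈ K,
      ‖(T i)^[n] x - (T i)^[n] y‖ ≤
        ‖(I i)^[n] x - (I i)^[n] y‖ + μ i n * φ i ‖(I i)^[n] x - (I i)^[n] y‖ + lam i n)
    (F : Set X)
    (hFdef : ∀ p, p ∈ F ↔ p ∈ K ∧ ∀ i, T i p = p ∧ I i p = p)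
    (M Ms N Ns : Fin m → ℝ)
    (hM : ∀ i, 0 < M i) (hMs : ∀ i, 0 < Ms i) (hN : ∀ i, 0 < N i) (hNs : ∀ i, 0 < Ns i)
    (hφbound : ∀ i ξ, M i ≤ ξ → φ i ξ ≤ Ms i * ξ)
    (hψbound : ∀ i ζ, N i ≤ ζ → ψ i ζ ≤ Ns i * ζ)
    (alo ahi blo bhi : ℝ)
    (halo : 0 < alo) (hahi1 : ahi < 1)
    (hblo : 0 < blo)
    (a b : Fin (m + 1) → ℕ → ℝ)
    (ha : ∀ j n, a j n ∈ Set.Icc alo ahi) (hb : ∀ j n, b j n ∈ Set.Icc blo bhi)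
    (hasum : ∀ n, ∑ j, a j n = 1) (hbsum : ∀ n, ∑ j, b j n = 1)
    (x y : ℕ → X) (hx0 : x 0 ∈ K)
    (hy : ∀ n, y n = b 0 n • x n + ∑ i : Fin m, b i.succ n • (I i)^[n] (x n))
    (hxrec : ∀ n, x (n + 1) = a 0 n • x n + ∑ i : Fin m, a i.succ n • (T i)^[n] (y n))
    : ∀ p ∈ F, ∃ L : ℝ, Tendsto (fun n => ‖x n - p‖) atTop (nhds L) ∧
      Tendsto (fun n => ‖y n - p‖) atTop (nhds L) := by
  intro p hp
  obtain ⟨hpK, hpfix⟩ := (hFdef p).mp hp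
  have hIb : ∀ i, HasSummableAffineBound K p (fun n => (I i)^[n]) fun _ => id := fun i =>
    .of_le_add_mul_gauge hpK (fun n => Function.iterate_fixed (hpfix i).2 n) (fun _ => rfl)
      (htμ0 i) (htlam0 i) (htμsum i) (htlamsum i) (hψmono i).monotoneOn (hN i).le (hNs i).le
      (hψpos i _ (hN i).le) (hψbound i) (hI i)
  have hTb : ∀ i, HasSummableAffineBound K p (fun n => (T i)^[n]) fun _ => id := fun i =>
    (HasSummableAffineBound.of_le_add_mul_gauge hpK
      (fun n => Function.iterate_fixed (hpfix i).1 n)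
      (fun n => Function.iterate_fixed (hpfix i).2 n)
      (hμ0 i) (hlam0 i) (hμsum i) (hlamsum i) (hφmono i).monotoneOn (hM i).le (hMs i).le
      (hφpos i _ (hM i).le) (hφbound i) (hT i)).trans (hIb i)
  have ha0 : ∀ j n, 0 ≤ a j n := fun j n => halo.le.trans (ha j n).1
  have hb0 : ∀ j n, 0 ≤ b j n := fun j n => hblo.le.trans (hb j n).1
  have hxyK := hKco.mem_of_ishikawa_scheme (S := fun i n => (T i)^[n])
    (U := fun i n => (I i)^[n]) (fun i n => (hTK i).iterate n) (fun i n => (hIK i).iterate n)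
    ha0 hasum hb0 hbsum hx0 hy hxrec
  exact exists_tendsto_norm_sub_of_ishikawa_scheme hTb hIb hahi1 ha0 (fun n => (ha 0 n).2) hasum
    hb0 hbsum (fun n => (hxyK n).1) (fun n => (hxyK n).2) hy hxrec

/-- under the bounded-coefficient scheme hypotheses with all maps
continuous, for each `p ∈ F` the limit `lim ‖y n - p‖` exists and equals `lim ‖x n - p‖`. -/
theorem stmt11
    {X : Type*} [NormedAddCommGroup X] [NormedSpace ℝ X] [CompleteSpace X]
    [UniformConvexSpace X]
    {K : Set X} (hKne : K.Nonempty) (hKcl : IsClosed K) (hKco : Convex ℝ K)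
    {m : ℕ} (hm : 1 ≤ m)
    (T I : Fin m → X → X)
    (hTK : ∀ i, Set.MapsTo (T i) K K) (hIK : ∀ i, Set.MapsTo (I i) K K)
    (hTcont : ∀ i, ContinuousOn (T i) K) (hIcont : ∀ i, ContinuousOn (I i) K)
    (μ lam tμ tlam : Fin m → ℕ → ℝ)
    (hμ0 : ∀ i n, 0 ≤ μ i n) (hlam0 : ∀ i n, 0 ≤ lam i n)
    (htμ0 : ∀ i n, 0 ≤ tμ i n) (htlam0 : ∀ i n, 0 ≤ tlam i n)
    (hμlim : ∀ i, Tendsto (μ i) atTop (nhds 0)) (hlamlim : ∀ i, Tendsto (lam i) atTop (nhds 0))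
    (htμlim : ∀ i, Tendsto (tμ i) atTop (nhds 0))
    (htlamlim : ∀ i, Tendsto (tlam i) atTop (nhds 0))
    (hμsum : ∀ i, Summable (μ i)) (hlamsum : ∀ i, Summable (lam i))
    (htμsum : ∀ i, Summable (tμ i)) (htlamsum : ∀ i, Summable (tlam i))
    (φ ψ : Fin m → ℝ → ℝ)
    (hφmono : ∀ i, StrictMonoOn (φ i) (Set.Ici 0))
    (hφcont : ∀ i, ContinuousOn (φ i) (Set.Ici 0))
    (hφ0 : ∀ i, φ i 0 = 0) (hφpos : ∀ i t, 0 ≤ t → 0 ≤ φ i t)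
    (hψmono : ∀ i, StrictMonoOn (ψ i) (Set.Ici 0))
    (hψcont : ∀ i, ContinuousOn (ψ i) (Set.Ici 0))
    (hψ0 : ∀ i, ψ i 0 = 0) (hψpos : ∀ i t, 0 ≤ t → 0 ≤ ψ i t)
    (hI : ∀ i, ∀ n, 1 ≤ n → ∀ x ∈ K, ∀ y ∈ K,
      ‖(I i)^[n] x - (I i)^[n] y‖ ≤ ‖x - y‖ + tμ i n * ψ i ‖x - y‖ + tlam i n)
    (hT : ∀ i, ∀ n, 1 ≤ n → ∀ x ∈ K, ∀ y ∈ K,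
      ‖(T i)^[n] x - (T i)^[n] y‖ ≤
        ‖(I i)^[n] x - (I i)^[n] y‖ + μ i n * φ i ‖(I i)^[n] x - (I i)^[n] y‖ + lam i n)
    (F : Set X)
    (hFdef : ∀ p, p ∈ F ↔ p ∈ K ∧ ∀ i, T i p = p ∧ I i p = p)
    (hFne : F.Nonempty)
    (M Ms N Ns : Fin m → ℝ)
    (hM : ∀ i, 0 < M i) (hMs : ∀ i, 0 < Ms i) (hN : ∀ i, 0 < N i) (hNs : ∀ i, 0 < Ns i)
    (hφbound : ∀ i ξ, M i ≤ ξ → φ i ξ ≤ Ms i * ξ)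
    (hψbound : ∀ i ζ, N i ≤ ζ → ψ i ζ ≤ Ns i * ζ)
    (alo ahi blo bhi : ℝ)
    (halo : 0 < alo) (hahi : alo < ahi) (hahi1 : ahi < 1)
    (hblo : 0 < blo) (hbhi : blo < bhi) (hbhi1 : bhi < 1)
    (a b : Fin (m + 1) → ℕ → ℝ)
    (ha : ∀ j n, a j n ∈ Set.Icc alo ahi) (hb : ∀ j n, b j n ∈ Set.Icc blo bhi)
    (hasum : ∀ n, ∑ j, a j n = 1) (hbsum : ∀ n, ∑ j, b j n = 1)
    (x y : ℕ → X) (hx0 : x 0 ∈ K)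
    (hy : ∀ n, y n = b 0 n • x n + ∑ i : Fin m, b i.succ n • (I i)^[n] (x n))
    (hxrec : ∀ n, x (n + 1) = a 0 n • x n + ∑ i : Fin m, a i.succ n • (T i)^[n] (y n))
    : ∀ p ∈ F, ∃ L : ℝ, Tendsto (fun n => ‖x n - p‖) atTop (nhds L) ∧
      Tendsto (fun n => ‖y n - p‖) atTop (nhds L) :=
  stmt11_general hKco T I hTK hIK μ lam tμ tlam hμ0 hlam0 htμ0 htlam0 hμsum hlamsum htμsum htlamsum
    φ ψ hφmono hφpos hψmono hψpos hI hT F hFdef M Ms N Ns hM hMs hN hNs hφbound hψbound alo ahi blo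
    bhi halo hahi1 hblo a b ha hb hasum hbsum x y hx0 hy hxrec
end

section
/- Let α ∈ (0,1) and T_α : ℓ¹ → ℓ¹ as defined. Then for every k ≥ 1 and all x, y ∈ ℓ¹: ‖T_α^k(x) − T_α^k(y)‖_1 = α^k ( ‖x − y‖_1 + |√|x_1| − √|y_1|| − |x_1 − y_1| ). -/
/-!
Both `T_α x` and `T_α y` vanish in coordinate `0`, and beyond that `T_α` only rescales:
coordinate `1` becomes `α √|x₀|` and the tail `(x₁, x₂, …)` is shifted and multiplied by `α`.
Hence `‖T_α x - T_α y‖₁ = α (|√|x₀| - √|y₀|| + ‖x - y‖₁ - |x₀ - y₀|)`. Since `T_α` kills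
coordinate `0`, the correction term vanishes from the second application on, and every further
iterate contributes just a factor `α`.
-/

/-- The map `T_α : ℓ¹ → ℓ¹` from Example 1 of the paper, sending
`x = (x₁, x₂, …)` to `(0, α√|x₁|, α x₂, α x₃, …)` (here `0`-indexed: coordinate `0` of
the image is `0`, coordinate `1` is `α √|x 0|`, and coordinate `n + 2` is `α * x (n + 1)`). -/
noncomputable def Talpha (α : ℝ) (f : lp (fun _ : ℕ => ℝ) 1) : lp (fun _ : ℕ => ℝ) 1 :=
  ⟨fun n => match n with
    | 0 => 0
    | 1 => α * Real.sqrt |f 0|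
    | (n + 2) => α * f (n + 1), by
    apply memℓp_gen
    have h1 : Summable fun n : ℕ => ‖(f : ℕ → ℝ) n‖ := by
      have := (memℓp_gen_iff (p := 1) (by norm_num)).1 (lp.memℓp f)
      simpa using this
    have h2 : Summable fun n : ℕ => ‖(f : ℕ → ℝ) (n + 1)‖ :=
      (summable_nat_add_iff 1).2 h1
    have h3 : Summable fun n : ℕ => |α| * ‖(f : ℕ → ℝ) (n + 1)‖ := h2.mul_left _
    have h4 : Summable fun n : ℕ =>
        ‖(fun n => match n with
          | 0 => (0 : ℝ)
          | 1 => α * Real.sqrt |f 0|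
          | (n + 2) => α * f (n + 1)) n‖ := by
      rw [← summable_nat_add_iff 2]
      simpa [abs_mul] using h3
    simpa using h4⟩

section LpOne

variable {E : Type*} [NormedAddCommGroup E]

lemma lp_one_summable_norm (f : lp (fun _ : ℕ => E) 1) : Summable fun n => ‖f n‖ := by
  simpa using (memℓp_gen_iff (p := 1) (by norm_num)).1 (lp.memℓp f)

lemma lp_one_norm_eq_tsum (f : lp (fun _ : ℕ => E) 1) : ‖f‖ = ∑' n, ‖f n‖ := by
  simpa using lp.norm_eq_tsum_rpow (p := 1) (by norm_num) f

lemma lp_one_norm_eq_norm_zero_add_tsum (f : lp (fun _ : ℕ => E) 1) :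
    ‖f‖ = ‖f 0‖ + ∑' n, ‖f (n + 1)‖ := by
  rw [lp_one_norm_eq_tsum, (lp_one_summable_norm f).tsum_eq_zero_add]

end LpOne

section Talpha

variable (α : ℝ) (x : lp (fun _ : ℕ => ℝ) 1)

@[simp]
lemma Talpha_apply_zero : Talpha α x 0 = 0 := rfl

@[simp]
lemma Talpha_apply_one : Talpha α x 1 = α * √|x 0| := rfl

@[simp]
lemma Talpha_apply_add_two (n : ℕ) : Talpha α x (n + 2) = α * x (n + 1) := rfl

end Talpha

lemma norm_Talpha_sub {α : ℝ} (hα : 0 ≤ α) (x y : lp (fun _ : ℕ => ℝ) 1) :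
    ‖Talpha α x - Talpha α y‖ = α * (‖x - y‖ + |√(|x 0|) - √(|y 0|)| - |x 0 - y 0|) := by
  have hxy : ‖x - y‖ = |x 0 - y 0| + ∑' n, |x (n + 1) - y (n + 1)| := by
    simp [lp_one_norm_eq_norm_zero_add_tsum]
  have hT : ‖Talpha α x - Talpha α y‖ =
      α * |√(|x 0|) - √(|y 0|)| + ∑' n, α * |x (n + 1) - y (n + 1)| := by
    have hsum := (summable_nat_add_iff 1).2 (lp_one_summable_norm (Talpha α x - Talpha α y))
    rw [lp_one_norm_eq_norm_zero_add_tsum, hsum.tsum_eq_zero_add]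
    simp [← mul_sub, abs_of_nonneg hα]
  rw [hT, tsum_mul_left, hxy]
  ring

lemma norm_Talpha_iterate_succ_sub {α : ℝ} (hα : 0 ≤ α) (m : ℕ) (x y : lp (fun _ : ℕ => ℝ) 1) :
    ‖(Talpha α)^[m + 1] x - (Talpha α)^[m + 1] y‖ =
      α ^ (m + 1) * (‖x - y‖ + |√(|x 0|) - √(|y 0|)| - |x 0 - y 0|) := by
  induction m generalizing x y with
  | zero => simpa using norm_Talpha_sub hα x y
  | succ m ih =>
    rw [Function.iterate_succ_apply _ (m + 1) x, Function.iterate_succ_apply _ (m + 1) y, ih]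
    simp only [Talpha_apply_zero, sub_self, abs_zero, Real.sqrt_zero, add_zero, sub_zero,
      norm_Talpha_sub hα x y]
    ring

/-- for `α ∈ (0,1)`, `k ≥ 1` and all `x, y ∈ ℓ¹`,
`‖T_α^k x - T_α^k y‖₁ = α^k (‖x - y‖₁ + |√|x 0| - √|y 0|| - |x 0 - y 0|)`. -/
theorem stmt16 (α : ℝ) (hα : α ∈ Set.Ioo (0 : ℝ) 1) :
    ∀ k : ℕ, 1 ≤ k → ∀ x y : lp (fun _ : ℕ => ℝ) 1,
      ‖(Talpha α)^[k] x - (Talpha α)^[k] y‖ =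
        α ^ k * (‖x - y‖ + abs (Real.sqrt |x 0| - Real.sqrt |y 0|) - |x 0 - y 0|) := by
  intro k hk x y
  obtain ⟨m, rfl⟩ := Nat.exists_eq_add_of_le' hk
  exact norm_Talpha_iterate_succ_sub hα.1.le m x y
end

section
/- Let α ∈ (0,1) and T_α : ℓ¹ → ℓ¹ as defined, and let B_1 = {x ∈ ℓ¹ : ‖x‖_1 ≤ 1}. Then for every k ≥ 1 and all x, y ∈ B_1: ‖T_α^k(x) − T_α^k(y)‖_1 ≤ α^k ( ‖x − y‖_1 + √(‖x − y‖_1) ). In particular, T_α restricted to B_1 is a total asymptotically nonexpansive mapping with μ_k = α^k, λ_k = 0 and gauge φ(t) = t + √t. -/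
lemma l1_norm_eq (f : lp (fun _ : ℕ => ℝ) 1) : ‖f‖ = ∑' n, ‖(f : ℕ → ℝ) n‖ := by
  rw [lp.norm_eq_tsum_rpow (by norm_num)]; simp

lemma l1_summable (f : lp (fun _ : ℕ => ℝ) 1) : Summable fun n => ‖(f : ℕ → ℝ) n‖ := by
  have := (memℓp_gen_iff (p := 1) (by norm_num)).1 (lp.memℓp f)
  simpa using this

lemma Tstep (α : ℝ) (hα : 0 ≤ α) (f g : lp (fun _ : ℕ => ℝ) 1) :
    ‖Talpha α f - Talpha α g‖ =
      α * abs (Real.sqrt (abs ((f : ℕ → ℝ) 0)) - Real.sqrt (abs ((g : ℕ → ℝ) 0)))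
      + α * (‖f - g‖ - abs ((f : ℕ → ℝ) 0 - (g : ℕ → ℝ) 0)) := by
  have hfg : Summable fun n => ‖((f - g : lp (fun _ : ℕ => ℝ) 1) : ℕ → ℝ) n‖ :=
    l1_summable _
  have hc : ∀ n, ((f - g : lp (fun _ : ℕ => ℝ) 1) : ℕ → ℝ) n
      = (f : ℕ → ℝ) n - (g : ℕ → ℝ) n := fun n => by
    rw [lp.coeFn_sub]; rfl
  have hT : Summable fun n =>
      ‖((Talpha α f - Talpha α g : lp (fun _ : ℕ => ℝ) 1) : ℕ → ℝ) n‖ := l1_summable _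
  have hTc : ∀ n, ((Talpha α f - Talpha α g : lp (fun _ : ℕ => ℝ) 1) : ℕ → ℝ) n
      = (Talpha α f : ℕ → ℝ) n - (Talpha α g : ℕ → ℝ) n := fun n => by
    rw [lp.coeFn_sub]; rfl
  rw [l1_norm_eq, l1_norm_eq]
  rw [Summable.tsum_eq_zero_add hT, Summable.tsum_eq_zero_add ((summable_nat_add_iff 1).2 hT)]
  rw [Summable.tsum_eq_zero_add hfg]
  have e0 : ‖((Talpha α f - Talpha α g : lp (fun _ : ℕ => ℝ) 1) : ℕ → ℝ) 0‖ = 0 := by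
    rw [hTc]; show ‖(0 : ℝ) - 0‖ = 0; simp
  have e1 : ‖((Talpha α f - Talpha α g : lp (fun _ : ℕ => ℝ) 1) : ℕ → ℝ) 1‖ =
      α * abs (Real.sqrt (abs ((f : ℕ → ℝ) 0)) - Real.sqrt (abs ((g : ℕ → ℝ) 0))) := by
    rw [hTc]
    show ‖α * Real.sqrt (abs ((f : ℕ → ℝ) 0)) - α * Real.sqrt (abs ((g : ℕ → ℝ) 0))‖ = _
    rw [← mul_sub, Real.norm_eq_abs, abs_mul, abs_of_nonneg hα]
  have e2 : ∀ n : ℕ, ‖((Talpha α f - Talpha α g : lp (fun _ : ℕ => ℝ) 1) : ℕ → ℝ) (n + 1 + 1)‖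
      = α * ‖((f - g : lp (fun _ : ℕ => ℝ) 1) : ℕ → ℝ) (n + 1)‖ := by
    intro n
    rw [hTc, hc]
    show ‖α * (f : ℕ → ℝ) (n + 1) - α * (g : ℕ → ℝ) (n + 1)‖ = _
    rw [← mul_sub, Real.norm_eq_abs, abs_mul, abs_of_nonneg hα, Real.norm_eq_abs]
  rw [e0, e1, tsum_congr e2, tsum_mul_left]
  have : ‖((f - g : lp (fun _ : ℕ => ℝ) 1) : ℕ → ℝ) 0‖
      = abs ((f : ℕ → ℝ) 0 - (g : ℕ → ℝ) 0) := by rw [hc]; rfl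
  rw [this]
  ring

lemma my_sqrt_add_le (a b : ℝ) (ha : 0 ≤ a) (hb : 0 ≤ b) :
    Real.sqrt (a + b) ≤ Real.sqrt a + Real.sqrt b := by
  rw [show a + b = Real.sqrt a ^ 2 + Real.sqrt b ^ 2 by
    rw [Real.sq_sqrt ha, Real.sq_sqrt hb]]
  nlinarith [Real.sqrt_nonneg a, Real.sqrt_nonneg b,
    Real.sqrt_le_sqrt (show Real.sqrt a ^ 2 + Real.sqrt b ^ 2 ≤ (Real.sqrt a + Real.sqrt b) ^ 2 by
      nlinarith [Real.sqrt_nonneg a, Real.sqrt_nonneg b]),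
    Real.sqrt_sq (add_nonneg (Real.sqrt_nonneg a) (Real.sqrt_nonneg b))]

lemma my_abs_sqrt_sub (a b : ℝ) :
    |Real.sqrt a - Real.sqrt b| ≤ Real.sqrt |a - b| := by
  wlog h : b ≤ a generalizing a b
  · rw [abs_sub_comm, abs_sub_comm a b]; exact this b a (le_of_not_ge h)
  rcases le_or_gt b 0 with hb | hb
  · rw [Real.sqrt_eq_zero'.2 hb, sub_zero]
    rcases le_or_gt a 0 with ha | ha
    · simp [Real.sqrt_eq_zero'.2 ha, Real.sqrt_nonneg]
    · rw [abs_of_nonneg (Real.sqrt_nonneg a)]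
      exact Real.sqrt_le_sqrt (by rw [abs_of_nonneg (by linarith)]; linarith)
  · have hb' := hb.le
    have ha : 0 ≤ a := le_trans hb' h
    rw [abs_of_nonneg (sub_nonneg.2 (Real.sqrt_le_sqrt h)), abs_of_nonneg (by linarith)]
    have := my_sqrt_add_le b (a - b) hb' (by linarith)
    rw [add_sub_cancel] at this
    linarith

lemma Tcontract (α : ℝ) (hα : 0 ≤ α) (f g : lp (fun _ : ℕ => ℝ) 1)
    (h0 : (f : ℕ → ℝ) 0 = (g : ℕ → ℝ) 0) :
    ‖Talpha α f - Talpha α g‖ ≤ α * ‖f - g‖ := by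
  rw [Tstep α hα]
  rw [h0]
  have h1 : abs ((g : ℕ → ℝ) 0 - (g : ℕ → ℝ) 0) = 0 := by simp
  simp only [sub_self, abs_zero, mul_zero, zero_add, h1, sub_zero, le_refl]

lemma Tbound (α : ℝ) (hα : 0 ≤ α) (f g : lp (fun _ : ℕ => ℝ) 1) :
    ‖Talpha α f - Talpha α g‖ ≤ α * (‖f - g‖ + Real.sqrt ‖f - g‖) := by
  rw [Tstep α hα]
  have h0 : abs ((f : ℕ → ℝ) 0 - (g : ℕ → ℝ) 0) ≤ ‖f - g‖ := by
    have := lp.norm_apply_le_norm (p := 1) (by norm_num) (f - g) 0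
    rw [lp.coeFn_sub] at this
    simpa [Real.norm_eq_abs] using this
  have h1 : abs (Real.sqrt (abs ((f : ℕ → ℝ) 0)) - Real.sqrt (abs ((g : ℕ → ℝ) 0)))
      ≤ Real.sqrt ‖f - g‖ := by
    refine le_trans (my_abs_sqrt_sub _ _) (Real.sqrt_le_sqrt (le_trans (abs_abs_sub_abs_le_abs_sub _ _) h0))
  have h2 : ‖f - g‖ - abs ((f : ℕ → ℝ) 0 - (g : ℕ → ℝ) 0) ≤ ‖f - g‖ := by
    have := abs_nonneg ((f : ℕ → ℝ) 0 - (g : ℕ → ℝ) 0); linarith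
  nlinarith [mul_le_mul_of_nonneg_left h1 hα, mul_le_mul_of_nonneg_left h2 hα]

lemma Titer (α : ℝ) (hα : 0 ≤ α) (j : ℕ) :
    ∀ f g : lp (fun _ : ℕ => ℝ) 1, (f : ℕ → ℝ) 0 = (g : ℕ → ℝ) 0 →
    ‖(Talpha α)^[j] f - (Talpha α)^[j] g‖ ≤ α ^ j * ‖f - g‖ := by
  induction j with
  | zero => intro f g _; simp
  | succ j ih =>
    intro f g h0
    rw [Function.iterate_succ_apply, Function.iterate_succ_apply]
    calc ‖(Talpha α)^[j] (Talpha α f) - (Talpha α)^[j] (Talpha α g)‖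
        ≤ α ^ j * ‖Talpha α f - Talpha α g‖ := ih _ _ rfl
      _ ≤ α ^ j * (α * ‖f - g‖) :=
          mul_le_mul_of_nonneg_left (Tcontract α hα f g h0) (pow_nonneg hα j)
      _ = α ^ (j + 1) * ‖f - g‖ := by ring

/-- for `α ∈ (0,1)`, `k ≥ 1` and all `x, y` in the closed unit ball `B₁`
of `ℓ¹`, `‖T_α^k x - T_α^k y‖₁ ≤ α^k (‖x - y‖₁ + √(‖x - y‖₁))`; in particular `T_α`
restricted to `B₁` is total asymptotically nonexpansive with `μ_k = α^k`, `λ_k = 0` and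
gauge `φ(t) = t + √t`. -/
theorem stmt17 (α : ℝ) (hα : α ∈ Set.Ioo (0 : ℝ) 1) :
    ∀ k : ℕ, 1 ≤ k → ∀ x : lp (fun _ : ℕ => ℝ) 1, ‖x‖ ≤ 1 →
      ∀ y : lp (fun _ : ℕ => ℝ) 1, ‖y‖ ≤ 1 →
      ‖(Talpha α)^[k] x - (Talpha α)^[k] y‖ ≤
          α ^ k * (‖x - y‖ + Real.sqrt ‖x - y‖) ∧
      ‖(Talpha α)^[k] x - (Talpha α)^[k] y‖ ≤
          ‖x - y‖ + α ^ k * (‖x - y‖ + Real.sqrt ‖x - y‖) + 0 := by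
  intro k hk x _ y _
  obtain ⟨m, rfl⟩ : ∃ m, k = m + 1 := ⟨k - 1, (Nat.succ_pred_eq_of_pos hk).symm⟩
  have hα0 : (0 : ℝ) ≤ α := hα.1.le
  have key : ‖(Talpha α)^[m + 1] x - (Talpha α)^[m + 1] y‖ ≤
      α ^ (m + 1) * (‖x - y‖ + Real.sqrt ‖x - y‖) := by
    rw [Function.iterate_succ_apply, Function.iterate_succ_apply]
    calc ‖(Talpha α)^[m] (Talpha α x) - (Talpha α)^[m] (Talpha α y)‖
        ≤ α ^ m * ‖Talpha α x - Talpha α y‖ := Titer α hα0 m _ _ rfl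
      _ ≤ α ^ m * (α * (‖x - y‖ + Real.sqrt ‖x - y‖)) :=
          mul_le_mul_of_nonneg_left (Tbound α hα0 x y) (pow_nonneg hα0 m)
      _ = α ^ (m + 1) * (‖x - y‖ + Real.sqrt ‖x - y‖) := by ring
  refine ⟨key, le_trans key ?_⟩
  have := norm_nonneg (x - y)
  linarith
end

section
/- Let α ∈ (0,1) and T_α : ℓ¹ → ℓ¹ as defined, and let B_1 = {x ∈ ℓ¹ : ‖x‖_1 ≤ 1}. Then T_α restricted to B_1 is not asymptotically nonexpansive: for every sequence of positive real numbers {λ_n} with λ_n → 0 and every k ≥ 1, there exist x, y ∈ B_1 with x ≠ y such that ‖T_α^k(x) − T_α^k(y)‖_1 > (1 + λ_k)‖x − y‖_1. (Indeed one may take x = (x_0, 0, 0, …) and y = (x_0/4, 0, 0, …) with 0 < x_0 < 4α^{2k}/(9(1+λ_k)²).) -/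
/-
`T_α` moves the first coordinate `c` of `c e₀` to `α √|c|` in position `1` and then shifts it
right, scaling by `α`, so `T_α^(k+1) (c e₀) = α^(k+1) √|c| e_(k+1)`. Hence on such vectors the
iterates behave like a multiple of the square root, which is not Lipschitz at `0`: taking
`x = c e₀`, `y = (c/4) e₀` with `c` small makes `‖T_α^k x - T_α^k y‖ / ‖x - y‖ = 2α^k / (3√c)`
as large as we like.
-/

open Filter

local notation "ℓ¹" => lp (fun _ : ℕ => ℝ) 1

lemma Talpha_single_zero (α c : ℝ) :
    Talpha α (lp.single 1 0 c) = lp.single 1 1 (α * Real.sqrt |c|) := by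
  ext (_ | _ | n) <;> simp [Talpha, lp.single_apply]

lemma Talpha_single_succ (α b : ℝ) (m : ℕ) :
    Talpha α (lp.single 1 (m + 1) b) = lp.single 1 (m + 2) (α * b) := by
  ext (_ | _ | n) <;> simp [Talpha, lp.single_apply, Pi.single_apply]

lemma Talpha_iterate_single_zero (α c : ℝ) (k : ℕ) :
    (Talpha α)^[k + 1] (lp.single 1 0 c) = lp.single 1 (k + 1) (α ^ (k + 1) * Real.sqrt |c|) := by
  induction k with
  | zero => simpa using Talpha_single_zero α c
  | succ k ih =>
    rw [Function.iterate_succ_apply', ih, Talpha_single_succ, pow_succ']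
    ring_nf

lemma norm_lp_single_sub_single (i : ℕ) (a b : ℝ) :
    ‖(lp.single 1 i a : ℓ¹) - lp.single 1 i b‖ = |a - b| := by
  rw [← lp.single_sub, lp.norm_single one_pos, Real.norm_eq_abs]

/-- With `s = 1 / (3M + 1)` and `c = s²`: `M (c - c/4) = (3/4) M s² < s/2 = √c - √(c/4)`. -/
lemma exists_mul_sub_lt_sqrt_sub {M : ℝ} (hM : 0 ≤ M) :
    ∃ c : ℝ, 0 < c ∧ c ≤ 1 ∧ M * (c - c / 4) < Real.sqrt c - Real.sqrt (c / 4) := by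
  set s := 1 / (3 * M + 1)
  have hs : 0 < s := by positivity
  have hs1 : s ≤ 1 := div_le_one_of_le₀ (by linarith) (by positivity)
  have hMs : 3 * M * s < 2 := by
    have : (3 * M + 1) * s = 1 := mul_one_div_cancel (by positivity)
    nlinarith
  refine ⟨s ^ 2, by positivity, pow_le_one₀ hs.le hs1, ?_⟩
  rw [Real.sqrt_sq hs.le, show s ^ 2 / 4 = (s / 2) ^ 2 by ring, Real.sqrt_sq (by positivity)]
  nlinarith

/-- `T_α` restricted to the closed unit ball `B₁` of `ℓ¹` is not
asymptotically nonexpansive: for every sequence of positive reals `lam` with `lam → 0`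
and every `k ≥ 1`, there are `x, y ∈ B₁`, `x ≠ y`, with
`‖T_α^k x - T_α^k y‖₁ > (1 + lam k) ‖x - y‖₁`. -/
theorem stmt18 (α : ℝ) (hα : α ∈ Set.Ioo (0 : ℝ) 1) :
    ∀ lam : ℕ → ℝ, (∀ n, 0 < lam n) → Tendsto lam atTop (nhds 0) →
      ∀ k : ℕ, 1 ≤ k →
        ∃ x : lp (fun _ : ℕ => ℝ) 1, ‖x‖ ≤ 1 ∧
        ∃ y : lp (fun _ : ℕ => ℝ) 1, ‖y‖ ≤ 1 ∧ x ≠ y ∧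
          (1 + lam k) * ‖x - y‖ < ‖(Talpha α)^[k] x - (Talpha α)^[k] y‖ := by
  intro lam hlam _ k hk
  obtain ⟨n, rfl⟩ := Nat.exists_eq_add_of_le' hk
  have hαk : 0 < α ^ (n + 1) := pow_pos hα.1 _
  have hM : 0 ≤ (1 + lam (n + 1)) / α ^ (n + 1) := by have := hlam (n + 1); positivity
  obtain ⟨c, hc0, hc1, hc⟩ := exists_mul_sub_lt_sqrt_sub hM
  have hdist : ‖(lp.single 1 0 c : ℓ¹) - lp.single 1 0 (c / 4)‖ = c - c / 4 := by
    rw [norm_lp_single_sub_single, abs_of_pos (by linarith)]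
  refine ⟨lp.single 1 0 c, ?_, lp.single 1 0 (c / 4), ?_, ?_, ?_⟩
  · rwa [lp.norm_single one_pos, Real.norm_of_nonneg hc0.le]
  · rw [lp.norm_single one_pos, Real.norm_of_nonneg (by positivity)]; linarith
  · rw [← sub_ne_zero, ← norm_ne_zero_iff, hdist]; linarith
  · rw [hdist, Talpha_iterate_single_zero, Talpha_iterate_single_zero, norm_lp_single_sub_single,
      abs_of_pos hc0, abs_of_pos (show 0 < c / 4 by positivity), ← mul_sub,
      abs_of_pos (mul_pos hαk (sub_pos.2 (Real.sqrt_lt_sqrt (by positivity) (by linarith))))]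
    rwa [div_mul_eq_mul_div, div_lt_iff₀ hαk, mul_comm _ (α ^ _)] at hc
end
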